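/- arXiv:1706.06583 — 2 statements merged into one kernel-verified Lean document; each statement's English description precedes it below -/
import Mathlib

section
/- Let S = P_S ∪ L_S be a resolving set for an affine plane of order q. If |S| ≤ 3q − 4, then |L_S| ≥ 2q − 3. -/
/-!
A point outside `P_S` is at distance 2 from every point of `P_S`, and at distance 1 or 3 from a
line according as it lies on it or not. So a resolving set separates the outer points by the
lines of `L_S` through them: at most one outer point lies on no line of `L_S`, and each line of
`L_S` carries at most one outer point lying on no other line of `L_S`; all remaining outer points
lie on at least two lines of `L_S`. Counting incidences between outer points and `L_S` gives
`2 (q² - |P_S|) ≤ 2 + |L_S| (q + 1)`, and with `|P_S| + |L_S| ≤ 3q - 4` this forces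
`|L_S| ≥ 2q - 3`.
-/

open Set

/-- The bipartite point-line incidence graph of an incidence relation `I`. -/
def IncGraph {Pt Ln : Type*} (I : Pt → Ln → Prop) : SimpleGraph (Pt ⊕ Ln) where
  Adj x y := (∃ p l, x = Sum.inl p ∧ y = Sum.inr l ∧ I p l) ∨
             (∃ p l, x = Sum.inr l ∧ y = Sum.inl p ∧ I p l)
  symm := by
    refine ⟨?_⟩
    rintro x y (⟨p, l, hx, hy, h⟩ | ⟨p, l, hx, hy, h⟩)
    · exact Or.inr ⟨p, l, hy, hx, h⟩
    · exact Or.inl ⟨p, l, hy, hx, h⟩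
  loopless := by
    refine ⟨?_⟩
    rintro x (⟨p, l, hx, hy, h⟩ | ⟨p, l, hx, hy, h⟩) <;> subst hx <;> simp_all

/-- A set of vertices is a resolving set if every vertex is determined
by its distances to the elements of `S`. -/
def IsResolvingSet {V : Type*} (G : SimpleGraph V) (S : Set V) : Prop :=
  ∀ x y : V, (∀ s ∈ S, G.dist x s = G.dist y s) → x = y

/-- An affine plane of order `q`: `q²` points, `q² + q` lines, `q` points on each line,
`q + 1` lines through each point, and any two distinct points lie on a unique line. -/
def IsAffinePlane {Pt Ln : Type*} (q : ℕ) (I : Pt → Ln → Prop) : Prop :=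
  Nat.card Pt = q ^ 2 ∧ Nat.card Ln = q ^ 2 + q ∧
  (∀ l, {p | I p l}.ncard = q) ∧
  (∀ p, {l | I p l}.ncard = q + 1) ∧
  (∀ p₁ p₂ : Pt, p₁ ≠ p₂ → ∃! l, I p₁ l ∧ I p₂ l)

namespace IncGraph

variable {Pt Ln : Type*} {I : Pt → Ln → Prop}

theorem adj_inl_inr_iff {p : Pt} {l : Ln} :
    (IncGraph I).Adj (.inl p) (.inr l) ↔ I p l := by
  simp [IncGraph]

theorem not_adj_inl_inl (x y : Pt) : ¬ (IncGraph I).Adj (.inl x) (.inl y) := by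
  simp [IncGraph]

def sideColoring : (IncGraph I).Coloring Bool :=
  SimpleGraph.Coloring.mk Sum.isLeft <| by
    rintro _ _ (⟨p, l, rfl, rfl, -⟩ | ⟨p, l, rfl, rfl, -⟩) <;> simp

theorem odd_dist_inl_inr {x : Pt} {l : Ln} (h : (IncGraph I).Reachable (.inl x) (.inr l)) :
    Odd ((IncGraph I).dist (.inl x) (.inr l)) := by
  obtain ⟨w, hw⟩ := h.exists_walk_length_eq_dist
  rw [← hw, sideColoring.odd_length_iff_not_congr]
  exact iff_of_false (not_not.mpr rfl) Bool.false_ne_true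

theorem dist_inl_inr_of_inc {x : Pt} {l : Ln} (h : I x l) :
    (IncGraph I).dist (.inl x) (.inr l) = 1 :=
  SimpleGraph.dist_eq_one_iff_adj.mpr (adj_inl_inr_iff.mpr h)

theorem dist_inl_inl_of_ne (hjoin : ∀ x y : Pt, x ≠ y → ∃ m, I x m ∧ I y m) {x y : Pt}
    (hne : x ≠ y) : (IncGraph I).dist (.inl x) (.inl y) = 2 := by
  obtain ⟨m, hx, hy⟩ := hjoin x y hne
  let w : (IncGraph I).Walk (.inl x) (.inl y) :=
    .cons (adj_inl_inr_iff.mpr hx) (.cons (adj_inl_inr_iff.mpr hy).symm .nil)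
  have hle : (IncGraph I).dist (.inl x) (.inl y) ≤ 2 := (IncGraph I).dist_le w
  have hpos : 0 < (IncGraph I).dist (.inl x) (.inl y) :=
    w.reachable.pos_dist_of_ne (by simpa using hne)
  have hne1 : (IncGraph I).dist (.inl x) (.inl y) ≠ 1 :=
    fun h ↦ not_adj_inl_inl x y (SimpleGraph.dist_eq_one_iff_adj.mp h)
  omega

theorem dist_inl_inr_of_not_inc (hjoin : ∀ x y : Pt, x ≠ y → ∃ m, I x m ∧ I y m) {x : Pt}
    {l : Ln} (hl : ∃ p, I p l) (hxl : ¬ I x l) : (IncGraph I).dist (.inl x) (.inr l) = 3 := by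
  obtain ⟨p, hpl⟩ := hl
  obtain ⟨m, hxm, hpm⟩ := hjoin x p fun h ↦ hxl (h ▸ hpl)
  let w : (IncGraph I).Walk (.inl x) (.inr l) :=
    .cons (adj_inl_inr_iff.mpr hxm) (.cons (adj_inl_inr_iff.mpr hpm).symm
      (.cons (adj_inl_inr_iff.mpr hpl) .nil))
  have hle : (IncGraph I).dist (.inl x) (.inr l) ≤ 3 := (IncGraph I).dist_le w
  have hne1 : (IncGraph I).dist (.inl x) (.inr l) ≠ 1 :=
    fun h ↦ hxl (adj_inl_inr_iff.mp (SimpleGraph.dist_eq_one_iff_adj.mp h))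
  obtain ⟨k, hk⟩ := odd_dist_inl_inr w.reachable
  omega

end IncGraph

theorem IsResolvingSet.eq_of_forall_inc_iff {Pt Ln : Type*} {I : Pt → Ln → Prop}
    (hjoin : ∀ x y : Pt, x ≠ y → ∃ m, I x m ∧ I y m) (hline : ∀ l, ∃ p, I p l)
    {PS : Set Pt} {LS : Set Ln}
    (hres : IsResolvingSet (IncGraph I) (Sum.inl '' PS ∪ Sum.inr '' LS))
    {x y : Pt} (hx : x ∉ PS) (hy : y ∉ PS) (hxy : ∀ l ∈ LS, I x l ↔ I y l) : x = y := by
  refine Sum.inl_injective (hres _ _ ?_)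
  rintro _ (⟨p, hp, rfl⟩ | ⟨l, hl, rfl⟩)
  · rw [IncGraph.dist_inl_inl_of_ne hjoin (ne_of_mem_of_not_mem hp hx).symm,
      IncGraph.dist_inl_inl_of_ne hjoin (ne_of_mem_of_not_mem hp hy).symm]
  · by_cases hxl : I x l
    · rw [IncGraph.dist_inl_inr_of_inc hxl, IncGraph.dist_inl_inr_of_inc ((hxy l hl).mp hxl)]
    · rw [IncGraph.dist_inl_inr_of_not_inc hjoin (hline l) hxl,
        IncGraph.dist_inl_inr_of_not_inc hjoin (hline l) (mt (hxy l hl).mpr hxl)]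

open Finset in
open Classical in
theorem two_mul_card_le_of_separated {Pt Ln : Type*} {I : Pt → Ln → Prop} (q : ℕ)
    (L : Finset Ln) (O : Finset Pt) (hline : ∀ l ∈ L, #{x ∈ O | I x l} ≤ q)
    (hsep : ∀ x ∈ O, ∀ y ∈ O, (∀ l ∈ L, I x l ↔ I y l) → x = y) :
    2 * #O ≤ 2 + #L * (q + 1) := by
  set cov : Pt → ℕ := fun x ↦ #{l ∈ L | I x l} with hcov
  have hdouble_count (P : Finset Pt) : ∑ x ∈ P, cov x = ∑ l ∈ L, #{x ∈ P | I x l} :=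
    sum_card_bipartiteAbove_eq_sum_card_bipartiteBelow I
  have huncovered : #{x ∈ O | cov x = 0} ≤ 1 := by
    refine card_le_one.mpr fun x hx y hy ↦ ?_
    simp only [mem_filter, hcov, card_eq_zero, filter_eq_empty_iff] at hx hy
    exact hsep x hx.1 y hy.1 fun l hl ↦ iff_of_false (hx.2 hl) (hy.2 hl)
  have hcov_one {x : Pt} (hx : cov x = 1) {l : Ln} (hl : l ∈ L) (hxl : I x l) :
      ∀ l' ∈ L, (I x l' ↔ l' = l) := by
    intro l' hl'
    obtain ⟨m, hm⟩ := card_eq_one.mp hx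
    have hmem : ∀ l'' ∈ L, I x l'' ↔ l'' = m := fun l'' hl'' ↦ by
      simpa [hl''] using Finset.ext_iff.mp hm l''
    rw [hmem l' hl', (hmem l hl).mp hxl]
  have hcovered_once : #{x ∈ O | cov x = 1} ≤ #L := by
    calc #{x ∈ O | cov x = 1} = ∑ x ∈ {x ∈ O | cov x = 1}, cov x := by
          rw [sum_congr rfl fun x hx ↦ (mem_filter.mp hx).2, card_eq_sum_ones]
      _ = ∑ l ∈ L, #{x ∈ {x ∈ O | cov x = 1} | I x l} := hdouble_count _
      _ ≤ ∑ l ∈ L, 1 := sum_le_sum fun l hl ↦ card_le_one.mpr fun x hx y hy ↦ by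
          simp only [mem_filter] at hx hy
          refine hsep x hx.1.1 y hy.1.1 fun l' hl' ↦ ?_
          rw [hcov_one hx.1.2 hl hx.2 l' hl', hcov_one hy.1.2 hl hy.2 l' hl']
      _ = #L := by rw [card_eq_sum_ones]
  have hincidences : ∑ x ∈ O, cov x ≤ #L * q := by
    rw [hdouble_count, ← smul_eq_mul]
    exact sum_le_card_nsmul L _ q hline
  calc 2 * #O = ∑ x ∈ O, 2 := by rw [sum_const, smul_eq_mul, mul_comm]
    _ ≤ ∑ x ∈ O, (cov x + 2 * (if cov x = 0 then 1 else 0) + (if cov x = 1 then 1 else 0)) :=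
        sum_le_sum fun x _ ↦ by split_ifs <;> omega
    _ = ∑ x ∈ O, cov x + 2 * #{x ∈ O | cov x = 0} + #{x ∈ O | cov x = 1} := by
        rw [sum_add_distrib, sum_add_distrib, ← mul_sum, card_filter, card_filter]
    _ ≤ 2 + #L * (q + 1) := by nlinarith

namespace IsAffinePlane

variable {Pt Ln : Type*} {q : ℕ} {I : Pt → Ln → Prop}

theorem exists_inc_inc (h : IsAffinePlane q I) (x y : Pt) (hne : x ≠ y) :
    ∃ m, I x m ∧ I y m :=
  (h.2.2.2.2 x y hne).exists

theorem exists_inc (h : IsAffinePlane q I) (hq : q ≠ 0) (l : Ln) : ∃ p, I p l :=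
  Set.nonempty_of_ncard_ne_zero (h.2.2.1 l ▸ hq)

end IsAffinePlane

/-- If `S = P_S ∪ L_S` is a resolving set for an affine plane of order `q` and
`|S| ≤ 3q - 4`, then `|L_S| ≥ 2q - 3`. -/
theorem affine_resolving_many_lines {Pt Ln : Type*} [Fintype Pt] [Fintype Ln]
    (q : ℕ) (I : Pt → Ln → Prop) (hAP : IsAffinePlane q I)
    (PS : Set Pt) (LS : Set Ln)
    (hres : IsResolvingSet (IncGraph I) (Sum.inl '' PS ∪ Sum.inr '' LS))
    (hsize : (PS.ncard : ℤ) + LS.ncard ≤ 3 * q - 4) :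
    (LS.ncard : ℤ) ≥ 2 * q - 3 := by
  classical
  rcases Nat.lt_or_ge q 2 with hq | hq
  · omega
  have hline (l : Ln) : (PS.toFinsetᶜ.filter (I · l)).card ≤ q := by
    calc (PS.toFinsetᶜ.filter (I · l)).card ≤ (Finset.univ.filter (I · l)).card :=
          Finset.card_le_card (Finset.filter_subset_filter _ (Finset.subset_univ _))
      _ = q := by rw [← Set.toFinset_ofPred, ← Set.ncard_eq_toFinset_card', hAP.2.2.1 l]
  have hcount := two_mul_card_le_of_separated q LS.toFinset PS.toFinsetᶜ
    (fun l _ ↦ hline l) fun x hx y hy hxy ↦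
      hres.eq_of_forall_inc_iff hAP.exists_inc_inc (hAP.exists_inc (by omega))
        (by simpa using hx) (by simpa using hy) fun l hl ↦ hxy l (Set.mem_toFinset.mpr hl)
  have houter : PS.toFinsetᶜ.card + PS.ncard = q ^ 2 := by
    rw [Set.ncard_eq_toFinset_card', Finset.card_compl_add_card, ← Nat.card_eq_fintype_card,
      hAP.1]
  rw [← Set.ncard_eq_toFinset_card'] at hcount
  by_contra! hfew
  nlinarith [mul_le_mul_of_nonneg_right (show (LS.ncard : ℤ) ≤ 2 * q - 4 by omega)
    (show (0 : ℤ) ≤ q - 1 by omega)]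
end

section
/- For integers q ≥ 2 and 0 ≤ k ≤ 3q − 14, the function f(q,k) = (1/2 − 1/q)k² + (q² − 2q + 3/2)k + 3(6q − 28)(q + 1) − 3(q³ + q² + q) satisfies f(q,k) < 0. -/
/-- For integers `q ≥ 2` and `0 ≤ k ≤ 3q - 14`, the function
`f(q,k) = (1/2 - 1/q)k² + (q² - 2q + 3/2)k + 3(6q - 28)(q + 1) - 3(q³ + q² + q)`
is negative. -/
theorem f_neg (q k : ℤ) (hq : 2 ≤ q) (hk0 : 0 ≤ k) (hk : k ≤ 3 * q - 14) :
    (1 / 2 - 1 / (q : ℝ)) * (k : ℝ) ^ 2 + ((q : ℝ) ^ 2 - 2 * q + 3 / 2) * k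
      + 3 * (6 * (q : ℝ) - 28) * ((q : ℝ) + 1)
      - 3 * ((q : ℝ) ^ 3 + (q : ℝ) ^ 2 + q) < 0 := by
  have hq5 : (5 : ℤ) ≤ q := by omega
  have ha : (5 : ℝ) ≤ (q : ℝ) := by exact_mod_cast hq5
  have hb0 : (0 : ℝ) ≤ (k : ℝ) := by exact_mod_cast hk0
  have hb : (k : ℝ) ≤ 3 * (q : ℝ) - 14 := by
    have : (k : ℝ) ≤ ((3 * q - 14 : ℤ) : ℝ) := by exact_mod_cast hk
    push_cast at this; linarith
  have hqpos : (0 : ℝ) < (q : ℝ) := by linarith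
  set a := (q : ℝ) with ha'
  set b := (k : ℝ) with hb'
  have key : a * ((1 / 2 - 1 / a) * b ^ 2 + (a ^ 2 - 2 * a + 3 / 2) * b
      + 3 * (6 * a - 28) * (a + 1) - 3 * (a ^ 3 + a ^ 2 + a)) < 0 := by
    have hexp : a * ((1 / 2 - 1 / a) * b ^ 2 + (a ^ 2 - 2 * a + 3 / 2) * b
        + 3 * (6 * a - 28) * (a + 1) - 3 * (a ^ 3 + a ^ 2 + a))
        = (a / 2 - 1) * b ^ 2 + (a ^ 3 - 2 * a ^ 2 + 3 / 2 * a) * b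
          + 3 * a * (6 * a - 28) * (a + 1) - 3 * a * (a ^ 3 + a ^ 2 + a) := by
      field_simp
    rw [hexp]
    nlinarith [mul_nonneg (mul_nonneg hb0 (sub_nonneg.2 hb)) (by linarith : (0:ℝ) ≤ a - 2),
      mul_nonneg hb0 (sub_nonneg.2 hb), sq_nonneg b, sq_nonneg (a - 5),
      mul_nonneg (sq_nonneg b) (by linarith : (0:ℝ) ≤ a - 2),
      mul_nonneg (mul_nonneg hb0 hb0) (by linarith : (0:ℝ) ≤ a - 5),
      mul_nonneg hb0 (by linarith : (0:ℝ) ≤ a - 5)]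
  by_contra h
  push_neg at h
  nlinarith [mul_nonneg (le_of_lt hqpos) h]
end
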